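/- arXiv:2208.01125 — 4 statements merged into one kernel-verified Lean document; each statement's English description precedes it below -/
import Mathlib

section
/- For every polynomial p with real coefficients and every z > 0, the linear functional L[p] = ∫_{-z}^{z} p(x) e^{-x²} dx satisfies the Pearson-type equation L[∂_x((x²−z²)p(x))] = L[2x(x²−z²)p(x)]. -/
/-! Since `(q e^{-x²})' = (q' - 2xq) e^{-x²}`, the fundamental theorem of calculus turns
`L[q' - 2xq]` into the boundary term `q e^{-x²} |_{-z}^{z}`, and for `q = (x² - z²) p` both
boundary values vanish. -/

open Polynomial

/-- The truncated Hermite linear functional `L[p] = ∫_{-z}^{z} p(x) e^{-x²} dx`. -/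
noncomputable def truncL (z : ℝ) (p : Polynomial ℝ) : ℝ :=
  ∫ x in (-z)..z, p.eval x * Real.exp (-x ^ 2)

theorem intervalIntegrable_eval_mul_exp_neg_sq (p : ℝ[X]) (a b : ℝ) :
    IntervalIntegrable (fun x => p.eval x * Real.exp (-x ^ 2)) MeasureTheory.volume a b :=
  (p.continuous.mul (by fun_prop)).intervalIntegrable a b

theorem truncL_sub (z : ℝ) (p q : ℝ[X]) : truncL z (p - q) = truncL z p - truncL z q := by
  simp only [truncL, eval_sub, sub_mul]
  exact intervalIntegral.integral_sub (intervalIntegrable_eval_mul_exp_neg_sq p _ _)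
    (intervalIntegrable_eval_mul_exp_neg_sq q _ _)

theorem hasDerivAt_eval_mul_exp_neg_sq (q : ℝ[X]) (x : ℝ) :
    HasDerivAt (fun x => q.eval x * Real.exp (-x ^ 2))
      ((derivative q - 2 * X * q).eval x * Real.exp (-x ^ 2)) x := by
  have hexp : HasDerivAt (fun x => Real.exp (-x ^ 2)) (Real.exp (-x ^ 2) * -(2 * x)) x := by
    simpa using (hasDerivAt_pow 2 x).fun_neg.exp
  refine ((q.hasDerivAt x).mul hexp).congr_deriv ?_
  simp only [eval_sub, eval_mul, eval_ofNat, eval_X]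
  ring

theorem truncL_derivative_sub (z : ℝ) (q : ℝ[X]) :
    truncL z (derivative q - 2 * X * q) =
      q.eval z * Real.exp (-z ^ 2) - q.eval (-z) * Real.exp (-(-z) ^ 2) :=
  intervalIntegral.integral_eq_sub_of_hasDerivAt (fun x _ => hasDerivAt_eval_mul_exp_neg_sq q x)
    (intervalIntegrable_eval_mul_exp_neg_sq _ _ _)

theorem truncated_hermite_pearson_general (z : ℝ) (p : Polynomial ℝ) :
    truncL z (derivative ((X ^ 2 - C (z ^ 2)) * p)) =
      truncL z (2 * X * (X ^ 2 - C (z ^ 2)) * p) := by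
  rw [← sub_eq_zero, ← truncL_sub, mul_assoc (2 * X), truncL_derivative_sub]
  simp

theorem truncated_hermite_pearson (z : ℝ) (hz : 0 < z) (p : Polynomial ℝ) :
    truncL z (derivative ((X ^ 2 - C (z ^ 2)) * p)) =
      truncL z (2 * X * (X ^ 2 - C (z ^ 2)) * p) :=
  truncated_hermite_pearson_general z p
end

section
/- Let u_n(z) = ∫_{-z}^{z} x^{2n} e^{-x²} dx. Then for every n ∈ ℕ and z > 0, the second-order homogeneous recurrence 2·u_{n+2}(z) − (2n + 3 + 2z²)·u_{n+1}(z) + (2n+1)·z²·u_n(z) = 0 holds. -/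
/-- The even moments `u_n(z) = ∫_{-z}^{z} x^{2n} e^{-x²} dx`. -/
noncomputable def truncMoment (n : ℕ) (z : ℝ) : ℝ :=
  ∫ x in (-z)..z, x ^ (2 * n) * Real.exp (-x ^ 2)

/-! Integrating `(x^{k+1} e^{-x²})' = ((k+1) x^k - 2 x^{k+2}) e^{-x²}` over `[-z, z]` with `k = 2n`
gives the first-order inhomogeneous relation `(2n+1) u_n - 2 u_{n+1} = 2 z^{2n+1} e^{-z²}`.
The boundary term of index `n+1` is `z²` times that of index `n`, so it is eliminated between two
consecutive instances of the relation. -/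

open Real intervalIntegral MeasureTheory

lemma hasDerivAt_pow_succ_mul_exp_neg_sq (k : ℕ) (x : ℝ) :
    HasDerivAt (fun x : ℝ => x ^ (k + 1) * exp (-x ^ 2))
      ((k + 1) * (x ^ k * exp (-x ^ 2)) - 2 * (x ^ (k + 2) * exp (-x ^ 2))) x := by
  have hpow : HasDerivAt (fun x : ℝ => x ^ (k + 1)) ((k + 1 : ℕ) * x ^ k) x := by
    simpa using hasDerivAt_pow (k + 1) x
  have hexp : HasDerivAt (fun x : ℝ => exp (-x ^ 2)) (exp (-x ^ 2) * -(2 * x)) x := by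
    simpa using (hasDerivAt_pow 2 x).neg.exp
  exact (hpow.mul hexp).congr_deriv (by push_cast; ring)

lemma integral_pow_mul_exp_neg_sq_sub (k : ℕ) (a b : ℝ) :
    (k + 1) * (∫ x in a..b, x ^ k * exp (-x ^ 2)) - 2 * ∫ x in a..b, x ^ (k + 2) * exp (-x ^ 2)
      = b ^ (k + 1) * exp (-b ^ 2) - a ^ (k + 1) * exp (-a ^ 2) := by
  have hint (m : ℕ) : IntervalIntegrable (fun x : ℝ => x ^ m * exp (-x ^ 2)) volume a b :=
    (by fun_prop : Continuous fun x : ℝ => x ^ m * exp (-x ^ 2)).intervalIntegrable a b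
  rw [← intervalIntegral.integral_const_mul, ← intervalIntegral.integral_const_mul,
    ← integral_sub ((hint k).const_mul _) ((hint (k + 2)).const_mul _)]
  exact integral_eq_sub_of_hasDerivAt (fun x _ => hasDerivAt_pow_succ_mul_exp_neg_sq k x)
    (((hint k).const_mul _).sub ((hint (k + 2)).const_mul _))

lemma truncMoment_sub_truncMoment_succ (n : ℕ) (z : ℝ) :
    (2 * (n : ℝ) + 1) * truncMoment n z - 2 * truncMoment (n + 1) z
      = 2 * z ^ (2 * n + 1) * exp (-z ^ 2) := by
  have h := integral_pow_mul_exp_neg_sq_sub (2 * n) (-z) z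
  rw [Odd.neg_pow ⟨n, rfl⟩, neg_sq] at h
  rw [truncMoment, truncMoment, mul_add_one 2 n]
  push_cast at h
  linear_combination h

theorem truncated_hermite_moment_second_order_recurrence_general (n : ℕ) (z : ℝ) :
    2 * truncMoment (n + 2) z - (2 * (n : ℝ) + 3 + 2 * z ^ 2) * truncMoment (n + 1) z +
      (2 * (n : ℝ) + 1) * z ^ 2 * truncMoment n z = 0 := by
  have hn := truncMoment_sub_truncMoment_succ n z
  have hn1 := truncMoment_sub_truncMoment_succ (n + 1) z
  push_cast at hn1
  linear_combination z ^ 2 * hn - hn1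

theorem truncated_hermite_moment_second_order_recurrence (n : ℕ) (z : ℝ) (hz : 0 < z) :
    2 * truncMoment (n + 2) z - (2 * (n : ℝ) + 3 + 2 * z ^ 2) * truncMoment (n + 1) z +
      (2 * (n : ℝ) + 1) * z ^ 2 * truncMoment n z = 0 :=
  truncated_hermite_moment_second_order_recurrence_general n z
end

section
/- Let (P_n)_{n≥0} be the monic orthogonal polynomials for L[p] = ∫_{-z}^{z} p(x)e^{-x²}dx with three-term recurrence coefficients γ_n and norms h_n = L[P_n²]. Then for every n ≥ 1, P_n(z)²·e^{-z²} = [(2n+1)·h_n − 2(h_{n+1} + γ_n²·h_{n−1})] / (2z). -/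
/-!
Integrating `(x P(x)² e^{-x²})' = (P² + 2x P P' - 2x² P²) e^{-x²}` over `[-z, z]` gives
`2z P_n(z)² e^{-z²}`, since `P_n` has the parity of `n`. On the other side,
`L[P_n · x P_n'] = n h_n` because `x P_n' - n P_n` has degree `< n`, and
`L[(x P_n)²] = h_{n+1} + γ_n² h_{n-1}` by the recurrence and orthogonality.
-/

open Polynomial

namespace Polynomial

variable {R : Type*} [CommRing R]

theorem coeff_X_mul_derivative (p : R[X]) (n : ℕ) :
    (X * derivative p).coeff n = n * p.coeff n := by
  cases n with
  | zero => simp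
  | succ n => rw [coeff_X_mul, coeff_derivative, mul_comm]; push_cast; ring

theorem degree_X_mul_derivative_le (p : R[X]) :
    (X * derivative p).degree ≤ (p.natDegree : WithBot ℕ) :=
  (degree_le_iff_coeff_zero _ _).2 fun m hm => by
    rw [coeff_X_mul_derivative, coeff_eq_zero_of_natDegree_lt (mod_cast hm), mul_zero]

theorem degree_sub_C_coeff_mul_lt {p P : R[X]} {n : ℕ} (hP : P.Monic) (hPn : P.natDegree = n)
    (hp : p.degree ≤ n) : (p - C (p.coeff n) * P).degree < n := by
  rw [degree_lt_iff_coeff_zero]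
  intro m hm
  rw [coeff_sub, coeff_C_mul]
  rcases hm.eq_or_lt with rfl | hm
  · rw [← hPn, hP.coeff_natDegree, mul_one, sub_self]
  · rw [coeff_eq_zero_of_degree_lt (hp.trans_lt (mod_cast hm)),
      coeff_eq_zero_of_natDegree_lt (hPn.trans_lt hm), mul_zero, sub_zero]

theorem eval_neg_of_recurrence {P : ℕ → R[X]} {γ : ℕ → R} (hP0 : P 0 = 1) (hP1 : P 1 = X)
    (hrec : ∀ n, X * P (n + 1) = P (n + 2) + C (γ (n + 1)) * P n) (n : ℕ) (x : R) :
    (P n).eval (-x) = (-1) ^ n * (P n).eval x := by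
  induction n using Nat.twoStepInduction with
  | zero => simp [hP0]
  | one => simp [hP1]
  | more n ih₀ ih₁ =>
    rw [eq_sub_of_add_eq (hrec n).symm]
    simp only [eval_sub, eval_mul, eval_X, eval_C, ih₀, ih₁]
    ring

end Polynomial

section OrthogonalFamily

variable {R : Type*} [CommRing R] (L : R[X] →ₗ[R] R) {P : ℕ → R[X]}

theorem map_mul_eq_zero_of_degree_lt (hmonic : ∀ n, (P n).Monic)
    (hdeg : ∀ n, (P n).natDegree = n) (horth : ∀ m n, m ≠ n → L (P m * P n) = 0)
    {n : ℕ} {q : R[X]} (hq : q.degree < n) : L (P n * q) = 0 := by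
  suffices ∀ d ≤ n, ∀ q : R[X], q.degree < d → L (P n * q) = 0 from this n le_rfl q hq
  intro d
  induction d with
  | zero =>
    intro _ q hq
    rw [Nat.cast_zero, Nat.WithBot.lt_zero_iff, degree_eq_bot] at hq
    rw [hq, mul_zero, map_zero]
  | succ d ih =>
    intro hd q hq
    have hr := degree_sub_C_coeff_mul_lt (hmonic d) (hdeg d) (Order.le_of_lt_succ hq)
    have hsplit : P n * q = P n * (q - C (q.coeff d) * P d) + q.coeff d • (P n * P d) := by
      rw [smul_eq_C_mul]; ring
    rw [hsplit, map_add, map_smul, ih (by omega) _ hr, horth n d (by omega), smul_zero, add_zero]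

theorem map_mul_eq_coeff_mul_of_degree_le (hmonic : ∀ n, (P n).Monic)
    (hdeg : ∀ n, (P n).natDegree = n) (horth : ∀ m n, m ≠ n → L (P m * P n) = 0)
    {n : ℕ} {q : R[X]} (hq : q.degree ≤ n) : L (P n * q) = q.coeff n * L (P n * P n) := by
  have hsplit : P n * q = P n * (q - C (q.coeff n) * P n) + q.coeff n • (P n * P n) := by
    rw [smul_eq_C_mul]; ring
  rw [hsplit, map_add, map_smul, smul_eq_mul,
    map_mul_eq_zero_of_degree_lt L hmonic hdeg horth
      (degree_sub_C_coeff_mul_lt (hmonic n) (hdeg n) hq), zero_add]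

theorem map_mul_X_mul_derivative_self (hmonic : ∀ n, (P n).Monic)
    (hdeg : ∀ n, (P n).natDegree = n) (horth : ∀ m n, m ≠ n → L (P m * P n) = 0) (n : ℕ) :
    L (P n * (X * derivative (P n))) = n * L (P n * P n) := by
  have hq := degree_X_mul_derivative_le (P n)
  rw [hdeg] at hq
  have hlead : (P n).coeff n = 1 := by
    simpa only [hdeg] using (hmonic n).coeff_natDegree
  rw [map_mul_eq_coeff_mul_of_degree_le L hmonic hdeg horth hq, coeff_X_mul_derivative, hlead,
    mul_one]

theorem map_X_mul_mul_X_mul (horth : ∀ m n, m ≠ n → L (P m * P n) = 0) {γ : R} {n : ℕ}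
    (hrec : X * P (n + 1) = P (n + 2) + C γ * P n) :
    L (X * P (n + 1) * (X * P (n + 1))) = L (P (n + 2) * P (n + 2)) + γ ^ 2 * L (P n * P n) := by
  have hexpand : X * P (n + 1) * (X * P (n + 1)) =
      P (n + 2) * P (n + 2) + (2 * γ) • (P (n + 2) * P n) + γ ^ 2 • (P n * P n) := by
    simp only [hrec, smul_eq_C_mul, map_mul, map_pow, map_ofNat]
    ring
  rw [hexpand, map_add, map_add, map_smul, map_smul, horth (n + 2) n (by omega), smul_zero,
    add_zero, smul_eq_mul]

end OrthogonalFamily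

section TruncatedHermite

open Real

theorem continuous_eval_mul_exp_neg_sq (p : ℝ[X]) :
    Continuous fun x : ℝ => p.eval x * exp (-x ^ 2) := by
  fun_prop

noncomputable def truncLinear (z : ℝ) : ℝ[X] →ₗ[ℝ] ℝ where
  toFun := truncL z
  map_add' p q := by
    simp only [truncL, eval_add, add_mul]
    exact intervalIntegral.integral_add ((continuous_eval_mul_exp_neg_sq p).intervalIntegrable _ _)
      ((continuous_eval_mul_exp_neg_sq q).intervalIntegrable _ _)
  map_smul' c p := by
    simp only [truncL, eval_smul, smul_eq_mul, mul_assoc, RingHom.id_apply]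
    exact intervalIntegral.integral_const_mul c _

@[simp]
theorem truncLinear_apply (z : ℝ) (p : ℝ[X]) : truncLinear z p = truncL z p :=
  rfl

theorem truncL_derivative_sub_two_mul_X_mul (z : ℝ) (q : ℝ[X]) :
    truncL z (derivative q - 2 * X * q) = (q.eval z - q.eval (-z)) * exp (-z ^ 2) := by
  have hderiv (x : ℝ) : HasDerivAt (fun y => q.eval y * exp (-y ^ 2))
      ((derivative q - 2 * X * q).eval x * exp (-x ^ 2)) x := by
    refine ((q.hasDerivAt x).mul (hasDerivAt_pow 2 x).fun_neg.exp).congr_deriv ?_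
    simp only [eval_sub, eval_mul, eval_ofNat, eval_X]
    push_cast
    ring
  rw [truncL, intervalIntegral.integral_eq_sub_of_hasDerivAt (fun x _ => hderiv x)
    ((continuous_eval_mul_exp_neg_sq _).intervalIntegrable _ _), neg_sq, sub_mul]

end TruncatedHermite

theorem truncated_hermite_square_boundary_identity (z : ℝ) (hz : 0 < z)
    (P : ℕ → Polynomial ℝ) (γ h : ℕ → ℝ)
    (hmonic : ∀ n, (P n).Monic) (hdeg : ∀ n, (P n).natDegree = n)
    (horth : ∀ m n, m ≠ n → truncL z (P m * P n) = 0)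
    (hP0 : P 0 = 1) (hP1 : P 1 = X)
    (hrec : ∀ n, X * P (n + 1) = P (n + 2) + C (γ (n + 1)) * P n)
    (hh : ∀ n, h n = truncL z (P n * P n)) :
    ∀ n : ℕ, 1 ≤ n →
      (P n).eval z ^ 2 * Real.exp (-z ^ 2) =
        ((2 * (n : ℝ) + 1) * h n - 2 * (h (n + 1) + γ n ^ 2 * h (n - 1))) / (2 * z) := by
  intro n hn
  obtain ⟨m, rfl⟩ := Nat.exists_eq_add_of_le' hn
  have hsplit : derivative (X * P (m + 1) ^ 2) - 2 * X * (X * P (m + 1) ^ 2) =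
      P (m + 1) * P (m + 1) + (2 : ℝ) • (P (m + 1) * (X * derivative (P (m + 1)))) -
        (2 : ℝ) • (X * P (m + 1) * (X * P (m + 1))) := by
    simp only [derivative_mul, derivative_X, derivative_sq, smul_eq_C_mul, map_ofNat]
    ring
  have hboundary := truncL_derivative_sub_two_mul_X_mul z (X * P (m + 1) ^ 2)
  have hparity : (P (m + 1)).eval (-z) ^ 2 = (P (m + 1)).eval z ^ 2 := by
    rw [eval_neg_of_recurrence hP0 hP1 hrec, mul_pow, ← pow_mul, pow_mul', neg_one_sq, one_pow,
      one_mul]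
  change truncLinear z _ = _ at hboundary
  rw [hsplit, map_sub, map_add, map_smul, map_smul,
    map_mul_X_mul_derivative_self (truncLinear z) hmonic hdeg horth,
    map_X_mul_mul_X_mul (truncLinear z) horth (hrec m)] at hboundary
  simp only [truncLinear_apply, ← hh, smul_eq_mul, eval_mul, eval_pow, eval_X, hparity]
    at hboundary
  rw [Nat.add_sub_cancel, eq_div_iff (by positivity)]
  push_cast at hboundary ⊢
  linear_combination -hboundary
end

section
/- For the monic truncated Hermite polynomials, if γ_n(z) admits a power series expansion γ_n(z) = Σ_{k≥1} η_{n,k} z^{2k} near z = 0, then the leading coefficient is η_{n,1} = n²/(4n² − 1). -/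
/-!
Write `h_n(z) = truncL z (P_n²)`. The recurrence and the orthogonality give `γ_{n+1} h_n = h_{n+1}`,
so everything rests on the asymptotics `h_n(z) ~ z^{2n+1} ‖ℓ_n‖²` as `z → 0⁺`, where `ℓ_n` is the
monic Legendre polynomial and `‖·‖` the norm of `L²[-1, 1]`. They come from two extremal
properties: among monic polynomials `q` of degree `n`, `P_n` minimises `truncL z (q²)` and `ℓ_n`
minimises `∫_{-1}^1 q²`. Comparing `P_n` with `ℓ_n` rescaled to `[-z, z]`, and `ℓ_n` with `P_n`
rescaled to `[-1, 1]`, while `e^{-z²} ≤ e^{-x²} ≤ 1` on `[-z, z]`, squeezes `h_n(z) / z^{2n+1}`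
between `e^{-z²} ‖ℓ_n‖²` and `‖ℓ_n‖²`. Hence `η_{n,1} = lim γ_n(z) / z² = ‖ℓ_n‖² / ‖ℓ_{n-1}‖²`,
which Rodrigues' formula evaluates to `n² / (4n² - 1)`.
-/

open Polynomial

open Filter Topology
open scoped Nat

namespace Polynomial

theorem Monic.iterate_derivative_natDegree {R : Type*} [CommSemiring R] {p : R[X]}
    (hp : p.Monic) : derivative^[p.natDegree] p = C (p.natDegree ! : R) := by
  ext m
  rw [coeff_iterate_derivative, coeff_C]
  rcases Nat.eq_zero_or_pos m with rfl | hm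
  · simp [hp.coeff_natDegree, Nat.descFactorial_self]
  · rw [coeff_eq_zero_of_natDegree_lt (by omega), smul_zero, if_neg hm.ne']

section OrthogonalFamily

variable {R : Type*} [CommRing R]

theorem Monic.degree_sub_lt_natDegree {p q : R[X]} (hp : p.Monic) (hq : q.Monic)
    (h : p.natDegree = q.natDegree) : (p - q).degree < p.natDegree := by
  rw [degree_lt_iff_coeff_zero]
  intro m hm
  rw [coeff_sub]
  rcases hm.eq_or_lt with rfl | hm
  · rw [hp.coeff_natDegree, h, hq.coeff_natDegree, sub_self]
  · rw [coeff_eq_zero_of_natDegree_lt hm, coeff_eq_zero_of_natDegree_lt (h ▸ hm), sub_self]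

variable (L : R[X] →ₗ[R] R) {p : ℕ → R[X]}

theorem apply_mul_eq_zero_of_degree_lt (hmonic : ∀ i, (p i).Monic)
    (hdeg : ∀ i, (p i).natDegree = i) (horth : ∀ i j, i ≠ j → L (p i * p j) = 0)
    {n : ℕ} {r : R[X]} (hr : r.degree < n) : L (p n * r) = 0 := by
  suffices ∀ d ≤ n, ∀ r : R[X], r.degree < d → L (p n * r) = 0 from this n le_rfl r hr
  intro d
  induction d with
  | zero =>
    intro _ r hr
    rw [show r = 0 by simpa using hr, mul_zero, map_zero]
  | succ d ih =>
    intro hd r hr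
    have hlow : (r - C (r.coeff d) * p d).degree < d := by
      rw [degree_lt_iff_coeff_zero] at hr ⊢
      intro m hm
      rw [coeff_sub, coeff_C_mul]
      rcases hm.eq_or_lt with rfl | hm
      · have h1 := (hmonic d).coeff_natDegree
        rw [hdeg] at h1
        rw [h1, mul_one, sub_self]
      · rw [hr m hm, coeff_eq_zero_of_natDegree_lt (p := p d) (by rwa [hdeg]), mul_zero,
          sub_zero]
    have hsplit : p n * r = p n * (r - C (r.coeff d) * p d) + r.coeff d • (p n * p d) := by
      rw [smul_eq_C_mul]; ring
    rw [hsplit, map_add, map_smul, ih (by omega) _ hlow, horth n d (by omega), smul_zero,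
      add_zero]

theorem apply_mul_self_eq_of_recurrence [Nontrivial R] (hmonic : ∀ i, (p i).Monic)
    (hdeg : ∀ i, (p i).natDegree = i) (horth : ∀ i j, i ≠ j → L (p i * p j) = 0)
    {k : ℕ} {g : R} (hrec : X * p (k + 1) = p (k + 2) + C g * p k) :
    g * L (p k * p k) = L (p (k + 1) * p (k + 1)) := by
  have hX : (X * p k - p (k + 1)).degree < ↑(k + 1) := by
    have hXp : (X * p k).natDegree = (p (k + 1)).natDegree := by
      rw [natDegree_X_mul (hmonic k).ne_zero, hdeg, hdeg]
    simpa [hXp, hdeg] using (monic_X.mul (hmonic k)).degree_sub_lt_natDegree (hmonic _) hXp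
  calc g * L (p k * p k) = L ((X * p (k + 1)) * p k) := by
        rw [hrec, add_mul, mul_assoc, ← smul_eq_C_mul, map_add, map_smul,
          horth (k + 2) k (by omega), zero_add, smul_eq_mul]
    _ = L (p (k + 1) * p (k + 1)) + L (p (k + 1) * (X * p k - p (k + 1))) := by
        rw [← map_add]; congr 1; ring
    _ = L (p (k + 1) * p (k + 1)) := by
        rw [apply_mul_eq_zero_of_degree_lt L hmonic hdeg horth hX, add_zero]

theorem apply_mul_self_le_of_monic [PartialOrder R] [IsOrderedAddMonoid R]
    (hL : ∀ r, 0 ≤ L (r * r)) {p q : R[X]} (hp : p.Monic) (hq : q.Monic)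
    (hpq : q.natDegree = p.natDegree)
    (horth : ∀ r : R[X], r.degree < p.natDegree → L (p * r) = 0) :
    L (p * p) ≤ L (q * q) := by
  have hlow := hq.degree_sub_lt_natDegree hp hpq
  rw [hpq] at hlow
  have hsplit : q * q = p * p + 2 • (p * (q - p)) + (q - p) * (q - p) := by ring
  rw [hsplit, map_add, map_add, map_nsmul, horth (q - p) hlow, smul_zero, add_zero]
  exact le_add_of_nonneg_right (hL _)

end OrthogonalFamily

noncomputable def weightedIntegral (w : C(ℝ, ℝ)) (a b : ℝ) : ℝ[X] →ₗ[ℝ] ℝ where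
  toFun p := ∫ x in a..b, p.eval x * w x
  map_add' p q := by
    simp only [eval_add, add_mul]
    exact intervalIntegral.integral_add ((p.continuous.mul w.continuous).intervalIntegrable _ _)
      ((q.continuous.mul w.continuous).intervalIntegrable _ _)
  map_smul' c p := by
    simp only [eval_smul, smul_eq_mul, mul_assoc, intervalIntegral.integral_const_mul,
      RingHom.id_apply]

@[simp]
theorem weightedIntegral_apply (w : C(ℝ, ℝ)) (a b : ℝ) (p : ℝ[X]) :
    weightedIntegral w a b p = ∫ x in a..b, p.eval x * w x := rfl

theorem weightedIntegral_mul_self_nonneg {w : C(ℝ, ℝ)} (hw : ∀ x, 0 ≤ w x) {a b : ℝ}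
    (hab : a ≤ b) (p : ℝ[X]) : 0 ≤ weightedIntegral w a b (p * p) :=
  intervalIntegral.integral_nonneg hab fun x _ => by
    rw [eval_mul]; exact mul_nonneg (mul_self_nonneg _) (hw x)

theorem integral_eval_derivative_mul (p q : ℝ[X]) (a b : ℝ) :
    ∫ x in a..b, (derivative p).eval x * q.eval x = p.eval b * q.eval b - p.eval a * q.eval a
      - ∫ x in a..b, p.eval x * (derivative q).eval x := by
  simp only [mul_comm _ (q.eval _), mul_comm (p.eval _)]
  exact intervalIntegral.integral_mul_deriv_eq_deriv_mul (fun x _ => q.hasDerivAt x)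
    (fun x _ => p.hasDerivAt x) (q.derivative.continuous.intervalIntegrable _ _)
    (p.derivative.continuous.intervalIntegrable _ _)

theorem integral_eval_scaleRoots_mul_self (q : ℝ[X]) {z : ℝ} (hz : z ≠ 0) :
    ∫ x in (-z)..z, (q.scaleRoots z).eval x * (q.scaleRoots z).eval x
      = z ^ (2 * q.natDegree + 1) * ∫ t in (-1)..1, q.eval t * q.eval t := by
  have h := intervalIntegral.integral_comp_mul_left
    (fun x => (q.scaleRoots z).eval x * (q.scaleRoots z).eval x) hz (a := -1) (b := 1)
  simp only [mul_neg, mul_one, scaleRoots_eval_mul, smul_eq_mul] at h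
  rw [eq_inv_mul_iff_mul_eq₀ hz] at h
  rw [← h, ← intervalIntegral.integral_const_mul, ← intervalIntegral.integral_const_mul]
  congr 1 with t
  ring

section Legendre

noncomputable def rodrigues (n : ℕ) : ℝ[X] := derivative^[n] ((X ^ 2 - 1) ^ n)

theorem monic_X_sq_sub_one_pow (n : ℕ) : ((X ^ 2 - 1 : ℝ[X]) ^ n).Monic :=
  (monic_X_pow_sub_C 1 two_ne_zero).pow n

theorem natDegree_X_sq_sub_one_pow (n : ℕ) : ((X ^ 2 - 1 : ℝ[X]) ^ n).natDegree = 2 * n := by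
  rw [natDegree_pow, ← C_1, natDegree_X_pow_sub_C, mul_comm]

theorem coeff_rodrigues_self (n : ℕ) : (rodrigues n).coeff n = (2 * n).descFactorial n := by
  rw [rodrigues, coeff_iterate_derivative, ← two_mul, ← natDegree_X_sq_sub_one_pow n,
    (monic_X_sq_sub_one_pow n).coeff_natDegree, nsmul_one]

theorem natDegree_rodrigues (n : ℕ) : (rodrigues n).natDegree = n := by
  refine le_antisymm ?_ (le_natDegree_of_ne_zero ?_)
  · have := natDegree_iterate_derivative ((X ^ 2 - 1 : ℝ[X]) ^ n) n
    rw [natDegree_X_sq_sub_one_pow] at this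
    rw [rodrigues]; omega
  · rw [coeff_rodrigues_self, Nat.cast_ne_zero, Ne, Nat.descFactorial_eq_zero_iff_lt]
    omega

theorem eval_iterate_derivative_X_sq_sub_one_pow {j n : ℕ} (hj : j < n) {x : ℝ}
    (hx : x ^ 2 = 1) : (derivative^[j] ((X ^ 2 - 1 : ℝ[X]) ^ n)).eval x = 0 := by
  obtain ⟨s, hs⟩ := pow_sub_dvd_iterate_derivative_pow (X ^ 2 - 1 : ℝ[X]) n j
  rw [hs, eval_mul, eval_pow]
  simp [hx, zero_pow (Nat.sub_ne_zero_of_lt hj)]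

theorem integral_rodrigues_mul (n : ℕ) (q : ℝ[X]) :
    ∫ x in (-1)..1, (rodrigues n).eval x * q.eval x
      = (-1) ^ n * ∫ x in (-1)..1, ((X ^ 2 - 1) ^ n : ℝ[X]).eval x * (derivative^[n] q).eval x := by
  suffices ∀ i ≤ n, ∫ x in (-1)..1, (rodrigues n).eval x * q.eval x = (-1) ^ i *
      ∫ x in (-1)..1, (derivative^[n - i] ((X ^ 2 - 1) ^ n)).eval x * (derivative^[i] q).eval x by
    simpa using this n le_rfl
  intro i hi
  induction i with
  | zero => simp [rodrigues]
  | succ i ih =>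
    rw [ih (by omega), show n - i = n - (i + 1) + 1 by omega, Function.iterate_succ_apply',
      integral_eval_derivative_mul,
      eval_iterate_derivative_X_sq_sub_one_pow (j := n - (i + 1)) (by omega) (one_pow 2),
      eval_iterate_derivative_X_sq_sub_one_pow (j := n - (i + 1)) (by omega) (by norm_num),
      Function.iterate_succ_apply' derivative i]
    ring

noncomputable def monicLegendre (n : ℕ) : ℝ[X] := C ((n ! : ℝ) / (2 * n)!) * rodrigues n

theorem natDegree_monicLegendre (n : ℕ) : (monicLegendre n).natDegree = n := by
  rw [monicLegendre, natDegree_C_mul (by positivity), natDegree_rodrigues]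

theorem monic_monicLegendre (n : ℕ) : (monicLegendre n).Monic := by
  have h := Nat.factorial_mul_descFactorial (show n ≤ 2 * n by omega)
  rw [show 2 * n - n = n by omega] at h
  rw [Monic, leadingCoeff, natDegree_monicLegendre, monicLegendre, coeff_C_mul,
    coeff_rodrigues_self, div_mul_eq_mul_div, div_eq_one_iff_eq (by positivity)]
  exact_mod_cast h

theorem integral_monicLegendre_mul_eq_zero {n : ℕ} {r : ℝ[X]} (hr : r.degree < n) :
    ∫ x in (-1)..1, (monicLegendre n).eval x * r.eval x = 0 := by
  have hD : derivative^[n] r = 0 := by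
    rcases eq_or_ne r 0 with rfl | hr0
    · exact iterate_map_zero _ n
    · exact iterate_derivative_eq_zero ((natDegree_lt_iff_degree_lt hr0).mpr hr)
  simp only [monicLegendre, eval_mul, eval_C, mul_assoc, intervalIntegral.integral_const_mul,
    integral_rodrigues_mul, hD, eval_zero, mul_zero, intervalIntegral.integral_zero]

noncomputable def legendreNormSq (n : ℕ) : ℝ :=
  ∫ x in (-1)..1, (monicLegendre n).eval x * (monicLegendre n).eval x

theorem legendreNormSq_eq (n : ℕ) :
    legendreNormSq n = (n ! : ℝ) ^ 2 / (2 * n)! * ((-1) ^ n * ∫ x in (-1)..1, (x ^ 2 - 1) ^ n) := by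
  have hD := (monic_monicLegendre n).iterate_derivative_natDegree
  rw [natDegree_monicLegendre] at hD
  rw [legendreNormSq]
  conv_lhs => enter [1, x, 1]; rw [monicLegendre, eval_mul, eval_C]
  simp only [mul_assoc, intervalIntegral.integral_const_mul, integral_rodrigues_mul, hD, eval_C,
    eval_pow, eval_sub, eval_X, eval_one, intervalIntegral.integral_mul_const]
  ring

theorem integral_sq_sub_one_pow_succ (n : ℕ) :
    (2 * n + 3) * ∫ x in (-1)..1, (x ^ 2 - 1) ^ (n + 1)
      = -(2 * n + 2) * ∫ x in (-1)..1, (x ^ 2 - 1 : ℝ) ^ n := by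
  have hderiv : ∀ x : ℝ, HasDerivAt (fun x => x * (x ^ 2 - 1) ^ (n + 1))
      ((2 * n + 3) * (x ^ 2 - 1) ^ (n + 1) + (2 * n + 2) * (x ^ 2 - 1) ^ n) x := by
    intro x
    refine ((hasDerivAt_id' x).fun_mul
      (((hasDerivAt_pow 2 x).sub_const 1).fun_pow (n + 1))).congr_deriv ?_
    simp only [Nat.add_sub_cancel]
    push_cast
    ring
  have hint := intervalIntegral.integral_eq_sub_of_hasDerivAt (a := -1) (b := 1)
    (fun x _ => hderiv x) (Continuous.intervalIntegrable (by fun_prop) _ _)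
  rw [intervalIntegral.integral_add (Continuous.intervalIntegrable (by fun_prop) _ _)
    (Continuous.intervalIntegrable (by fun_prop) _ _), intervalIntegral.integral_const_mul,
    intervalIntegral.integral_const_mul] at hint
  norm_num at hint
  linarith

theorem legendreNormSq_succ (n : ℕ) :
    legendreNormSq (n + 1) = (n + 1) ^ 2 / ((2 * n + 1) * (2 * n + 3)) * legendreNormSq n := by
  have hI := integral_sq_sub_one_pow_succ n
  rw [legendreNormSq_eq, legendreNormSq_eq, show 2 * (n + 1) = 2 * n + 1 + 1 by ring,
    Nat.factorial_succ, Nat.factorial_succ, Nat.factorial_succ]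
  push_cast
  field_simp
  linear_combination -(-1) ^ n * hI

theorem legendreNormSq_zero : legendreNormSq 0 = 2 := by
  norm_num [legendreNormSq_eq]

theorem legendreNormSq_pos (n : ℕ) : 0 < legendreNormSq n := by
  induction n with
  | zero => rw [legendreNormSq_zero]; norm_num
  | succ n ih => rw [legendreNormSq_succ]; positivity

end Legendre

end Polynomial

theorem tendsto_div_sq_of_hasSum {g : ℝ → ℝ} {a : ℕ → ℝ}
    (hg : ∀ᶠ z in 𝓝[>] 0, HasSum (fun k => a k * z ^ (2 * (k + 1))) (g z)) :
    Tendsto (fun z => g z / z ^ 2) (𝓝[>] 0) (𝓝 (a 0)) := by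
  -- `g z / z²` is the sum at `z²` of `∑ aₖ wᵏ`, a power series converging at `w = u²`, hence
  -- continuous at `w = 0`.
  obtain ⟨u, hu : 0 < u, hgu⟩ := mem_nhdsGT_iff_exists_Ioc_subset.mp hg
  set F := FormalMultilinearSeries.ofScalars ℝ a
  have hsum : ∀ z ∈ Set.Ioc 0 u, HasSum (fun k => a k * (z ^ 2) ^ k) (g z / z ^ 2) := by
    intro z hz
    have hz2 : z ^ 2 ≠ 0 := pow_ne_zero _ hz.1.ne'
    have e : (fun k => a k * z ^ (2 * (k + 1)) / z ^ 2) = fun k => a k * (z ^ 2) ^ k := by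
      funext k
      rw [pow_mul, pow_succ, ← mul_assoc, mul_div_cancel_right₀ _ hz2]
    exact e ▸ (hgu hz).div_const (z ^ 2)
  have hF : 0 < F.radius := by
    let r : NNReal := ⟨u ^ 2, by positivity⟩
    refine lt_of_lt_of_le ?_ (F.le_radius_of_tendsto (r := r) (l := 0) ?_)
    · exact ENNReal.coe_pos.mpr (show (0 : ℝ) < u ^ 2 by positivity)
    · show Tendsto (fun n => ‖F n‖ * (u ^ 2) ^ n) atTop (𝓝 0)
      simpa [F, FormalMultilinearSeries.ofScalars_norm] using
        (hsum u ⟨hu, le_rfl⟩).summable.tendsto_atTop_zero.norm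
  have hcont : ContinuousAt (FormalMultilinearSeries.ofScalarsSum (E := ℝ) a) 0 :=
    (F.hasFPowerSeriesOnBall hF).hasFPowerSeriesAt.continuousAt
  have hsq : Tendsto (fun z : ℝ => z ^ 2) (𝓝[>] 0) (𝓝 0) := by
    simpa using ((continuous_pow 2).tendsto (0 : ℝ)).mono_left nhdsWithin_le_nhds
  have := hcont.tendsto.comp hsq
  simp only [FormalMultilinearSeries.ofScalarsSum_zero, smul_eq_mul, mul_one] at this
  refine this.congr' ?_
  filter_upwards [Ioc_mem_nhdsGT hu] with z hz
  simp [FormalMultilinearSeries.ofScalars_sum_eq, (hsum z hz).tsum_eq]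

noncomputable def gaussianWeight : C(ℝ, ℝ) := ⟨fun x => Real.exp (-x ^ 2), by fun_prop⟩

theorem weightedIntegral_gaussianWeight (z : ℝ) (p : ℝ[X]) :
    weightedIntegral gaussianWeight (-z) z p = truncL z p := rfl

theorem truncL_mul_self_le_integral {z : ℝ} (hz : 0 ≤ z) (p : ℝ[X]) :
    truncL z (p * p) ≤ ∫ x in (-z)..z, p.eval x * p.eval x := by
  refine intervalIntegral.integral_mono_on (by linarith) ?_ ?_ fun x _ => ?_
  · exact Continuous.intervalIntegrable (by fun_prop) _ _
  · exact Continuous.intervalIntegrable (by fun_prop) _ _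
  · rw [eval_mul]
    exact mul_le_of_le_one_right (mul_self_nonneg _) (Real.exp_le_one_iff.mpr (by nlinarith))

theorem exp_neg_sq_mul_integral_le_truncL {z : ℝ} (hz : 0 ≤ z) (p : ℝ[X]) :
    Real.exp (-z ^ 2) * ∫ x in (-z)..z, p.eval x * p.eval x ≤ truncL z (p * p) := by
  rw [← intervalIntegral.integral_const_mul]
  refine intervalIntegral.integral_mono_on (by linarith) ?_ ?_ fun x hx => ?_
  · exact Continuous.intervalIntegrable (by fun_prop) _ _
  · exact Continuous.intervalIntegrable (by fun_prop) _ _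
  · rw [eval_mul, mul_comm]
    have : x ^ 2 ≤ z ^ 2 := sq_le_sq' hx.1 hx.2
    exact mul_le_mul_of_nonneg_left (Real.exp_le_exp.mpr (by linarith)) (mul_self_nonneg _)

theorem truncL_mul_self_le {z : ℝ} (hz : 0 < z) {p : ℝ[X]} (hp : p.Monic)
    (horth : ∀ r : ℝ[X], r.degree < p.natDegree → truncL z (p * r) = 0) :
    truncL z (p * p) ≤ z ^ (2 * p.natDegree + 1) * legendreNormSq p.natDegree := by
  set Q := (monicLegendre p.natDegree).scaleRoots z
  have hQ : Q.natDegree = p.natDegree := by rw [natDegree_scaleRoots, natDegree_monicLegendre]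
  calc truncL z (p * p) ≤ truncL z (Q * Q) :=
        apply_mul_self_le_of_monic (weightedIntegral gaussianWeight (-z) z)
          (weightedIntegral_mul_self_nonneg (fun x => (Real.exp_pos _).le) (by linarith)) hp
          ((monic_scaleRoots_iff z).mpr (monic_monicLegendre _)) hQ horth
    _ ≤ ∫ x in (-z)..z, Q.eval x * Q.eval x := truncL_mul_self_le_integral hz.le Q
    _ = z ^ (2 * p.natDegree + 1) * legendreNormSq p.natDegree := by
        rw [integral_eval_scaleRoots_mul_self _ hz.ne', natDegree_monicLegendre, legendreNormSq]

theorem le_truncL_mul_self {z : ℝ} (hz : 0 < z) {p : ℝ[X]} (hp : p.Monic) :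
    Real.exp (-z ^ 2) * (z ^ (2 * p.natDegree + 1) * legendreNormSq p.natDegree)
      ≤ truncL z (p * p) := by
  set p' := p.scaleRoots z⁻¹
  have hp' : p'.scaleRoots z = p := by
    rw [← scaleRoots_mul, inv_mul_cancel₀ hz.ne', scaleRoots_one]
  have hmin : legendreNormSq p.natDegree ≤ ∫ t in (-1)..1, p'.eval t * p'.eval t := by
    have := apply_mul_self_le_of_monic (weightedIntegral (1 : C(ℝ, ℝ)) (-1) 1)
      (weightedIntegral_mul_self_nonneg (fun _ => zero_le_one) (by norm_num))
      (monic_monicLegendre p.natDegree) ((monic_scaleRoots_iff z⁻¹).mpr hp)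
      (by rw [natDegree_scaleRoots, natDegree_monicLegendre])
      (fun r hr => by
        rw [natDegree_monicLegendre] at hr
        simpa using integral_monicLegendre_mul_eq_zero hr)
    simpa [legendreNormSq] using this
  calc Real.exp (-z ^ 2) * (z ^ (2 * p.natDegree + 1) * legendreNormSq p.natDegree)
      ≤ Real.exp (-z ^ 2) *
          (z ^ (2 * p.natDegree + 1) * ∫ t in (-1)..1, p'.eval t * p'.eval t) := by
        gcongr
    _ = Real.exp (-z ^ 2) * ∫ x in (-z)..z, p.eval x * p.eval x := by
        conv_rhs => rw [← hp', integral_eval_scaleRoots_mul_self _ hz.ne', natDegree_scaleRoots]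
    _ ≤ truncL z (p * p) := exp_neg_sq_mul_integral_le_truncL hz.le p

theorem tendsto_truncL_mul_self_div {p : ℝ → ℝ[X]} {n : ℕ} (hmonic : ∀ z, (p z).Monic)
    (hdeg : ∀ z, (p z).natDegree = n)
    (horth : ∀ z, 0 < z → ∀ r : ℝ[X], r.degree < n → truncL z (p z * r) = 0) :
    Tendsto (fun z => truncL z (p z * p z) / z ^ (2 * n + 1)) (𝓝[>] 0)
      (𝓝 (legendreNormSq n)) := by
  have hlow : Tendsto (fun z => Real.exp (-z ^ 2) * legendreNormSq n) (𝓝[>] 0)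
      (𝓝 (legendreNormSq n)) :=
    tendsto_nhdsWithin_of_tendsto_nhds ((by fun_prop : Continuous fun z : ℝ =>
      Real.exp (-z ^ 2) * legendreNormSq n).tendsto' 0 _ (by simp))
  refine tendsto_of_tendsto_of_tendsto_of_le_of_le' hlow tendsto_const_nhds ?_ ?_ <;>
    filter_upwards [self_mem_nhdsWithin] with z (hz : 0 < z)
  · rw [le_div_iff₀ (by positivity)]
    simpa [hdeg, mul_assoc, mul_comm (legendreNormSq n)] using le_truncL_mul_self hz (hmonic z)
  · rw [div_le_iff₀ (by positivity)]
    simpa [hdeg, mul_comm] using truncL_mul_self_le hz (hmonic z) (hdeg z ▸ horth z hz)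

theorem truncated_hermite_gamma_series_leading_coeff_general (P : ℝ → ℕ → Polynomial ℝ) (γ : ℕ → ℝ → ℝ)
    (hmonic : ∀ z n, (P z n).Monic) (hdeg : ∀ z n, (P z n).natDegree = n)
    (horth : ∀ z, 0 < z → ∀ m n, m ≠ n → truncL z (P z m * P z n) = 0)
    (hrec : ∀ z, 0 < z → ∀ n, X * P z (n + 1) = P z (n + 2) + C (γ (n + 1) z) * P z n)
    (η : ℕ → ℕ → ℝ)
    (hseries : ∀ n, ∀ᶠ z in nhdsWithin 0 (Set.Ioi (0 : ℝ)),
      HasSum (fun k : ℕ => η n (k + 1) * z ^ (2 * (k + 1))) (γ n z)) :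
    ∀ n : ℕ, 1 ≤ n → η n 1 = (n : ℝ) ^ 2 / (4 * (n : ℝ) ^ 2 - 1) := by
  intro n hn
  obtain ⟨m, rfl⟩ : ∃ m, n = m + 1 := ⟨n - 1, by omega⟩
  have hnorm (k : ℕ) : Tendsto (fun z => truncL z (P z k * P z k) / z ^ (2 * k + 1)) (𝓝[>] 0)
      (𝓝 (legendreNormSq k)) :=
    tendsto_truncL_mul_self_div (fun z => hmonic z k) (fun z => hdeg z k) fun z hz _ hr =>
      apply_mul_eq_zero_of_degree_lt (weightedIntegral gaussianWeight (-z) z) (hmonic z)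
        (hdeg z) (horth z hz) hr
  have hstep : ∀ᶠ z in 𝓝[>] 0, γ (m + 1) z / z ^ 2 * (truncL z (P z m * P z m) / z ^ (2 * m + 1))
      = truncL z (P z (m + 1) * P z (m + 1)) / z ^ (2 * (m + 1) + 1) := by
    filter_upwards [self_mem_nhdsWithin] with z (hz : 0 < z)
    have := apply_mul_self_eq_of_recurrence (weightedIntegral gaussianWeight (-z) z) (hmonic z)
      (hdeg z) (horth z hz) (hrec z hz m)
    simp only [weightedIntegral_gaussianWeight] at this
    rw [← this]
    field_simp
    ring
  have hlim : η (m + 1) 1 * legendreNormSq m = legendreNormSq (m + 1) :=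
    tendsto_nhds_unique (((tendsto_div_sq_of_hasSum (hseries (m + 1))).mul (hnorm m)).congr' hstep)
      (hnorm (m + 1))
  rw [legendreNormSq_succ, mul_left_inj' (legendreNormSq_pos m).ne'] at hlim
  rw [hlim]
  push_cast
  ring

theorem truncated_hermite_gamma_series_leading_coeff (P : ℝ → ℕ → Polynomial ℝ) (γ h : ℕ → ℝ → ℝ)
    (hmonic : ∀ z n, (P z n).Monic) (hdeg : ∀ z n, (P z n).natDegree = n)
    (horth : ∀ z, 0 < z → ∀ m n, m ≠ n → truncL z (P z m * P z n) = 0)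
    (hP0 : ∀ z, P z 0 = 1) (hP1 : ∀ z, P z 1 = X)
    (hrec : ∀ z, 0 < z → ∀ n, X * P z (n + 1) = P z (n + 2) + C (γ (n + 1) z) * P z n)
    (hh : ∀ n z, h n z = truncL z (P z n * P z n)) (hγ0 : ∀ z, γ 0 z = 0)
    (η : ℕ → ℕ → ℝ)
    (hseries : ∀ n, ∀ᶠ z in nhdsWithin 0 (Set.Ioi (0 : ℝ)),
      HasSum (fun k : ℕ => η n (k + 1) * z ^ (2 * (k + 1))) (γ n z)) :
    ∀ n : ℕ, 1 ≤ n → η n 1 = (n : ℝ) ^ 2 / (4 * (n : ℝ) ^ 2 - 1) :=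
  truncated_hermite_gamma_series_leading_coeff_general P γ hmonic hdeg horth hrec η hseries
end
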